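/- arXiv:1105.0529 — 3 statements merged into one kernel-verified Lean document; each statement's English description precedes it below -/
import Mathlib

section
/- Let s ≥ 1 be an integer, I = (0,1), and let u ∈ H^s(I) ∩ H^1_0(I). Let d(x) = min(x, 1-x) be the distance to the boundary of I. Then u/d ∈ H^{s-1}(I) and there is a constant C (depending only on s) such that ‖u/d‖_{H^{s-1}(I)} ≤ C ‖u‖_{H^s(I)}. -/
/-!
Near `0` the function `u / d` is `u x / x`, and since `u 0 = 0` its `m`-th derivative is the
weighted mean `φ x = ∫₀¹ τ^m g (x τ) dτ` of `g = u^(m+1)`, which is continuous up to `x = 0`.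
From `x φ' = g - (m + 1) φ` one gets `(x φ²)' = 2 φ g - (2m + 1) φ²`, hence
`φ² = 4 g² - 2 (x φ²)' - (2 g - φ)² - 4 m φ² ≤ 4 g² - 2 (x φ²)'`, and integrating over `(0, a)`
gives the Hardy inequality `∫₀ᵃ φ² ≤ 4 ∫₀ᵃ g²`. The half `(1/2, 1)` is reduced to `(0, 1/2)` by the
reflection `x ↦ 1 - x`.
-/

open MeasureTheory Set

/-- The (squared) `H^k` norm on the interval `(0,1)`, realized as the sum of the
`L^2` norms (squared) of the derivatives of order `≤ k`. -/
noncomputable def HnormSq (k : ℕ) (u : ℝ → ℝ) : ℝ :=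
  ∑ m ∈ Finset.range (k + 1), ∫ x in Set.Ioo (0:ℝ) 1, (iteratedDeriv m u x) ^ 2

open Topology intervalIntegral

noncomputable def hardyMean (m : ℕ) (g : ℝ → ℝ) (x : ℝ) : ℝ :=
  ∫ τ in (0:ℝ)..1, τ ^ m * g (x * τ)

section HardyMean

variable {m : ℕ} {g : ℝ → ℝ}

theorem continuous_hardyMean (hg : Continuous g) : Continuous (hardyMean m g) :=
  continuous_parametric_intervalIntegral_of_continuous' (by fun_prop) 0 1

theorem hardyMean_eq_div {x : ℝ} (hx : x ≠ 0) :
    hardyMean m g x = (∫ t in (0:ℝ)..x, t ^ m * g t) / x ^ (m + 1) := by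
  have h := integral_comp_mul_left (a := 0) (b := 1) (fun t => t ^ m * g t) hx
  simp only [mul_zero, mul_one, mul_pow, mul_assoc, intervalIntegral.integral_const_mul,
    smul_eq_mul] at h
  rw [hardyMean, eq_div_iff (pow_ne_zero _ hx), ← mul_right_inj' (inv_ne_zero hx), ← h]
  field_simp
  ring

theorem hasDerivAt_hardyMean (hg : Continuous g) {x : ℝ} (hx : x ≠ 0) :
    HasDerivAt (hardyMean m g) ((g x - (m + 1) * hardyMean m g x) / x) x := by
  have hint : Continuous fun t : ℝ => t ^ m * g t := by fun_prop
  have hprim : HasDerivAt (fun y => ∫ t in (0:ℝ)..y, t ^ m * g t) (x ^ m * g x) x :=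
    integral_hasDerivAt_right (hint.intervalIntegrable 0 x)
      (hint.stronglyMeasurableAtFilter _ _) hint.continuousAt
  have hquot := hprim.div (hasDerivAt_pow (m + 1) x) (pow_ne_zero _ hx)
  have heq : hardyMean m g =ᶠ[𝓝 x] fun y => (∫ t in (0:ℝ)..y, t ^ m * g t) / y ^ (m + 1) :=
    eventually_ne_nhds hx |>.mono fun y hy => hardyMean_eq_div hy
  refine (hquot.congr_of_eventuallyEq heq).congr_deriv ?_
  rw [hardyMean_eq_div hx]
  field_simp
  push_cast
  ring

theorem hardyMean_succ_deriv {G : ℝ → ℝ} (hG : ContDiff ℝ 1 G) {x : ℝ} (hx : x ≠ 0) :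
    hardyMean (m + 1) (deriv G) x = (G x - (m + 1) * hardyMean m G x) / x := by
  have hpow (t : ℝ) : HasDerivAt (fun t => t ^ (m + 1)) ((m + 1) * t ^ m) t := by
    simpa using hasDerivAt_pow (m + 1) t
  have hibp := intervalIntegral.integral_mul_deriv_eq_deriv_mul (a := 0) (b := x)
    (fun t _ => hpow t) (fun t _ => (hG.differentiable one_ne_zero t).hasDerivAt)
    ((by fun_prop : Continuous fun t : ℝ => (m + 1) * t ^ m).intervalIntegrable _ _)
    ((hG.continuous_deriv le_rfl).intervalIntegrable _ _)
  simp only [mul_assoc, intervalIntegral.integral_const_mul] at hibp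
  rw [hardyMean_eq_div hx, hardyMean_eq_div hx, hibp]
  field_simp
  ring

theorem deriv_hardyMean {G : ℝ → ℝ} (hG : ContDiff ℝ 1 G) {x : ℝ} (hx : x ≠ 0) :
    deriv (hardyMean m G) x = hardyMean (m + 1) (deriv G) x := by
  rw [(hasDerivAt_hardyMean hG.continuous hx).deriv, hardyMean_succ_deriv hG hx]

theorem integral_hardyMean_sq_le (hg : Continuous g) {a : ℝ} (ha : 0 ≤ a) :
    ∫ x in (0:ℝ)..a, hardyMean m g x ^ 2 ≤ 4 * ∫ x in (0:ℝ)..a, g x ^ 2 := by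
  set φ := hardyMean m g
  have hφ : Continuous φ := continuous_hardyMean hg
  set D : ℝ → ℝ := fun x => 2 * φ x * g x - (2 * m + 1) * φ x ^ 2
  have hD : Continuous D := by fun_prop
  have hderiv : ∀ x ∈ Ioo 0 a, HasDerivAt (fun y => y * φ y ^ 2) (D x) x := by
    intro x hx
    have hx0 : x ≠ 0 := hx.1.ne'
    refine ((hasDerivAt_id' x).mul ((hasDerivAt_hardyMean hg hx0).pow 2)).congr_deriv ?_
    simp only [D, φ, Pi.pow_apply]
    field_simp
    ring
  have hftc : ∫ x in (0:ℝ)..a, D x = a * φ a ^ 2 := by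
    rw [integral_eq_sub_of_hasDerivAt_of_le ha (by fun_prop) hderiv (hD.intervalIntegrable _ _)]
    simp
  have hg4 : Continuous fun x => 4 * g x ^ 2 := by fun_prop
  calc ∫ x in (0:ℝ)..a, φ x ^ 2
      ≤ ∫ x in (0:ℝ)..a, (4 * g x ^ 2 - 2 * D x) := by
        refine integral_mono_on ha ((hφ.pow 2).intervalIntegrable _ _)
          ((hg4.sub (hD.const_mul 2)).intervalIntegrable _ _) fun x _ => ?_
        nlinarith [sq_nonneg (2 * g x - φ x), mul_nonneg m.cast_nonneg (sq_nonneg (φ x))]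
    _ = 4 * (∫ x in (0:ℝ)..a, g x ^ 2) - 2 * (a * φ a ^ 2) := by
        rw [intervalIntegral.integral_sub (hg4.intervalIntegrable _ _)
          ((hD.const_mul 2).intervalIntegrable _ _), intervalIntegral.integral_const_mul,
          intervalIntegral.integral_const_mul, hftc]
    _ ≤ 4 * ∫ x in (0:ℝ)..a, g x ^ 2 := by nlinarith [mul_nonneg ha (sq_nonneg (φ a))]

end HardyMean

theorem iteratedDeriv_div_id {m : ℕ} {u : ℝ → ℝ} (hu : ContDiff ℝ (m + 1) u) (hu0 : u 0 = 0)
    {x : ℝ} (hx : x ≠ 0) :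
    iteratedDeriv m (fun y => u y / y) x = hardyMean m (iteratedDeriv (m + 1) u) x := by
  induction m generalizing x with
  | zero =>
    have hu' : ∀ t ∈ uIcc 0 x, HasDerivAt u (deriv u t) t :=
      fun t _ => (hu.differentiable one_ne_zero t).hasDerivAt
    simp only [iteratedDeriv_zero, iteratedDeriv_one, hardyMean_eq_div hx, pow_zero, one_mul,
      zero_add, pow_one]
    rw [integral_eq_sub_of_hasDerivAt hu' ((hu.continuous_deriv le_rfl).intervalIntegrable _ _),
      hu0, sub_zero]
  | succ m ih =>
    have heq : iteratedDeriv m (fun y => u y / y) =ᶠ[𝓝 x]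
        hardyMean m (iteratedDeriv (m + 1) u) :=
      eventually_ne_nhds hx |>.mono fun y hy => ih (hu.of_le (by norm_cast; omega)) hy
    have hG : ContDiff ℝ 1 (iteratedDeriv (m + 1) u) :=
      (contDiff_nat_succ_iff_contDiff_one_iteratedDeriv.mp hu).2
    rw [iteratedDeriv_succ, heq.deriv_eq, deriv_hardyMean hG hx, ← iteratedDeriv_succ]

theorem iteratedDeriv_comp_const_sub_sq (k : ℕ) (h : ℝ → ℝ) (c x : ℝ) :
    iteratedDeriv k (fun y => h (c - y)) x ^ 2 = iteratedDeriv k h (c - x) ^ 2 := by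
  simp only [iteratedDeriv_comp_const_sub, smul_eq_mul, mul_pow, ← pow_mul]
  rw [mul_comm k 2, pow_mul, neg_one_sq, one_pow, one_mul]

section DivDist

variable {m : ℕ} {u : ℝ → ℝ}

theorem eqOn_iteratedDeriv_div_min (hu : ContDiff ℝ (m + 1) u) (hu0 : u 0 = 0) :
    EqOn (iteratedDeriv m fun x => u x / min x (1 - x))
      (hardyMean m (iteratedDeriv (m + 1) u)) (Ioo 0 (1 / 2)) := by
  intro x hx
  have hmin : EqOn (fun x => u x / min x (1 - x)) (fun x => u x / x) (Ioo 0 (1 / 2)) :=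
    fun y hy => by simp only [min_eq_left (by linarith [hy.2] : y ≤ 1 - y)]
  rw [hmin.iteratedDeriv_of_isOpen isOpen_Ioo m hx, iteratedDeriv_div_id hu hu0 hx.1.ne']

theorem intervalIntegrable_sq_iteratedDeriv_div_min (hu : ContDiff ℝ (m + 1) u)
    (hu0 : u 0 = 0) :
    IntervalIntegrable (fun x => iteratedDeriv m (fun x => u x / min x (1 - x)) x ^ 2)
      volume 0 (1 / 2) := by
  have hcont := continuous_hardyMean (m := m) (hu.continuous_iteratedDeriv (m + 1) le_rfl)
  refine ((hcont.pow 2).intervalIntegrable 0 (1 / 2)).congr_uIoo fun x hx => ?_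
  rw [uIoo_of_le (by norm_num)] at hx
  simp only [Pi.pow_apply, eqOn_iteratedDeriv_div_min hu hu0 hx]

theorem integral_sq_iteratedDeriv_div_min_le_half (hu : ContDiff ℝ (m + 1) u)
    (hu0 : u 0 = 0) :
    ∫ x in (0:ℝ)..1 / 2, iteratedDeriv m (fun x => u x / min x (1 - x)) x ^ 2
      ≤ 4 * ∫ x in (0:ℝ)..1 / 2, iteratedDeriv (m + 1) u x ^ 2 := by
  rw [integral_congr_Ioo_of_le (by norm_num) fun x hx =>
    congrArg (· ^ 2) (eqOn_iteratedDeriv_div_min hu hu0 hx)]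
  exact integral_hardyMean_sq_le (hu.continuous_iteratedDeriv (m + 1) le_rfl) (by norm_num)

theorem integral_sq_iteratedDeriv_div_min_le (hu : ContDiff ℝ (m + 1) u) (hu0 : u 0 = 0)
    (hu1 : u 1 = 0) :
    ∫ x in Ioo 0 1, iteratedDeriv m (fun x => u x / min x (1 - x)) x ^ 2
      ≤ 4 * ∫ x in Ioo 0 1, iteratedDeriv (m + 1) u x ^ 2 := by
  set v : ℝ → ℝ := fun x => u (1 - x)
  have hv : ContDiff ℝ (m + 1) v := hu.comp (by fun_prop)
  have hv0 : v 0 = 0 := by simp [v, hu1]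
  set F := fun x => iteratedDeriv m (fun x => u x / min x (1 - x)) x ^ 2
  set Fv := fun x => iteratedDeriv m (fun x => v x / min x (1 - x)) x ^ 2
  set G := fun x => iteratedDeriv (m + 1) u x ^ 2
  have hFv : F = fun x => Fv (1 - x) := by
    have hflip : (fun x => u x / min x (1 - x))
        = fun x => (fun y => v y / min y (1 - y)) (1 - x) := by
      funext x
      simp [v, min_comm]
    funext x
    simp only [F, Fv]
    rw [hflip]
    exact iteratedDeriv_comp_const_sub_sq m (fun y => v y / min y (1 - y)) 1 x
  have hGv : (fun x => iteratedDeriv (m + 1) v x ^ 2) = fun x => G (1 - x) :=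
    funext fun x => iteratedDeriv_comp_const_sub_sq _ _ _ _
  have hG : Continuous G := (hu.continuous_iteratedDeriv (m + 1) le_rfl).pow 2
  have hFright : IntervalIntegrable F volume (1 / 2) 1 := by
    have hleft_v := (intervalIntegrable_sq_iteratedDeriv_div_min hv hv0).comp_sub_left 1
    norm_num at hleft_v
    rw [hFv]
    exact hleft_v.symm
  have hright : ∫ x in (1 / 2 : ℝ)..1, F x ≤ 4 * ∫ x in (1 / 2 : ℝ)..1, G x :=
    calc ∫ x in (1 / 2 : ℝ)..1, F x
        = ∫ x in (0 : ℝ)..1 / 2, Fv x := by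
          rw [hFv, integral_comp_sub_left Fv]
          norm_num
      _ ≤ 4 * ∫ x in (0 : ℝ)..1 / 2, iteratedDeriv (m + 1) v x ^ 2 :=
          integral_sq_iteratedDeriv_div_min_le_half hv hv0
      _ = 4 * ∫ x in (1 / 2 : ℝ)..1, G x := by
          rw [hGv, integral_comp_sub_left G]
          norm_num
  rw [← integral_Ioc_eq_integral_Ioo, ← integral_Ioc_eq_integral_Ioo,
    ← integral_of_le zero_le_one, ← integral_of_le zero_le_one,
    ← integral_add_adjacent_intervals (intervalIntegrable_sq_iteratedDeriv_div_min hu hu0)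
      hFright,
    ← integral_add_adjacent_intervals (hG.intervalIntegrable 0 (1 / 2))
      (hG.intervalIntegrable _ _)]
  linarith [integral_sq_iteratedDeriv_div_min_le_half hu hu0]

end DivDist

theorem HnormSq_le_of_integral_sq_iteratedDeriv_le {k : ℕ} {f u : ℝ → ℝ} {C : ℝ} (hC : 0 ≤ C)
    (h : ∀ m ≤ k, ∫ x in Ioo 0 1, iteratedDeriv m f x ^ 2
      ≤ C * ∫ x in Ioo 0 1, iteratedDeriv (m + 1) u x ^ 2) :
    HnormSq k f ≤ C * HnormSq (k + 1) u := by
  have hu0 : 0 ≤ ∫ x in Ioo (0:ℝ) 1, iteratedDeriv 0 u x ^ 2 :=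
    setIntegral_nonneg measurableSet_Ioo fun x _ => sq_nonneg _
  calc HnormSq k f
      ≤ ∑ m ∈ Finset.range (k + 1), C * ∫ x in Ioo 0 1, iteratedDeriv (m + 1) u x ^ 2 :=
        Finset.sum_le_sum fun m hm => h m (Nat.lt_succ_iff.mp (Finset.mem_range.mp hm))
    _ ≤ C * HnormSq (k + 1) u := by
        rw [← Finset.mul_sum, HnormSq, Finset.sum_range_succ' _ (k + 1)]
        nlinarith

/-- Higher-order Hardy inequality: for `s ≥ 1` and `u ∈ H^s(0,1) ∩ H^1_0(0,1)`
(represented by a `C^s` function vanishing at `0` and `1`), the function `u/d`,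
where `d x = min x (1-x)` is the distance to the boundary, belongs to `H^{s-1}(0,1)`
with `‖u/d‖_{H^{s-1}} ≤ C ‖u‖_{H^s}`, the constant depending only on `s`. -/
theorem higher_order_hardy (s : ℕ) (hs : 1 ≤ s) :
    ∃ C > (0:ℝ), ∀ u : ℝ → ℝ, ContDiff ℝ (s : ℕ∞) u → u 0 = 0 → u 1 = 0 →
      HnormSq (s - 1) (fun x => u x / min x (1 - x)) ≤ C * HnormSq s u := by
  obtain ⟨k, rfl⟩ : ∃ k, s = k + 1 := ⟨s - 1, by omega⟩
  refine ⟨4, by norm_num, fun u hu hu0 hu1 => ?_⟩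
  rw [Nat.add_sub_cancel]
  refine HnormSq_le_of_integral_sq_iteratedDeriv_le (by norm_num) fun m hm => ?_
  exact integral_sq_iteratedDeriv_div_min_le (hu.of_le (by norm_cast; omega)) hu0 hu1
end

section
/- Let d(x) = min(x, 1−x) on I = (0,1) and let p ∈ {1,2}. There exists C > 0 depending only on p such that for every R ∈ C^1([0,1]), ‖R‖_{H^{1−p/2}(I)}^2 ≤ C ∫_I d(x)^p (|R(x)|² + |R'(x)|²) dx. In particular for p = 2, ‖R‖_{L^2(I)}^2 ≤ C ∫_I d(x)^2 (|R|² + |R'|²) dx. -/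
open MeasureTheory Set

/-- The Gagliardo `H^{1/2}(0,1)` seminorm (squared). -/
noncomputable def gagliardoSq (R : ℝ → ℝ) : ℝ :=
  ∫ p in (Set.Ioo (0:ℝ) 1) ×ˢ (Set.Ioo (0:ℝ) 1), (R p.1 - R p.2) ^ 2 / (p.1 - p.2) ^ 2

/-!
Write `ω t = t (1 - t)`, so that `ω t ≤ min t (1 - t) ≤ 1/2` on `[0, 1]`.

`L²` bound: `w = x (1 - x) (1 - 2x)` vanishes at `0` and `1` and `w' = 1 - 6ω`, so
`∫₀¹ (w' R² + 2 w R R') = 0`, and adding ten times this integral to a pointwise sum of squares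
gives `∫ R² ≤ 100 ∫ ω² (R² + R'²)`.

Gagliardo bound: `logit t = log t - log (1 - t)` has derivative `1/ω`, so Cauchy–Schwarz gives
`(R y - R x)² ≤ (logit y - logit x) ∫ₓʸ ω R'²`. Integrating over the square and exchanging the
order of integration, it remains to bound `∫∫_{x < s < y} (logit y - logit x) / (y - x)²`
uniformly in `s`. Split `logit y - logit x` at `s` and integrate `(y - x)⁻²` exactly in the
variable the logit no longer depends on; up to the symmetry `t ↦ 1 - t` this leaves
`∫ₛ¹ (logit y - logit s) (1/(y - s) - 1/y) dy`. By `2 log u ≤ u - u⁻¹` its integrand is at most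
`-2 √(s/(1-s))` times the derivative of `√((1 - y)/y)`, so the integral is at most `2`.
-/

namespace WeightedSobolev

open Real
open scoped ENNReal

theorem setIntegral_Ioo_eq_intervalIntegral {f : ℝ → ℝ} {a b : ℝ} (hab : a ≤ b) :
    ∫ x in Ioo a b, f x = ∫ x in a..b, f x := by
  rw [intervalIntegral.integral_of_le hab, integral_Ioc_eq_integral_Ioo]

theorem lintegral_Ioo_ofReal_eq_sub {F f : ℝ → ℝ} {a b : ℝ} (hab : a ≤ b)
    (hF : ContinuousOn F (Icc a b)) (hderiv : ∀ x ∈ Ioo a b, HasDerivAt F (f x) x)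
    (hf : ∀ x ∈ Ioo a b, 0 ≤ f x) :
    ∫⁻ x in Ioo a b, ENNReal.ofReal (f x) = ENNReal.ofReal (F b - F a) := by
  have hint : IntegrableOn f (Ioc a b) :=
    intervalIntegral.integrableOn_deriv_of_nonneg hF hderiv hf
  rw [← ofReal_integral_eq_lintegral_ofReal (hint.mono_set Ioo_subset_Ioc_self)
      ((ae_restrict_iff' measurableSet_Ioo).2 (ae_of_all _ hf)),
    setIntegral_Ioo_eq_intervalIntegral hab,
    intervalIntegral.integral_eq_sub_of_hasDerivAt_of_le hab hF hderiv
      ((intervalIntegrable_iff_integrableOn_Ioc_of_le hab).2 hint)]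

theorem sq_intervalIntegral_le_mul {f w : ℝ → ℝ} {a b : ℝ} (hab : a ≤ b)
    (hf : ContinuousOn f (Icc a b)) (hw : ContinuousOn w (Icc a b))
    (hw0 : ∀ x ∈ Icc a b, 0 < w x) :
    (∫ x in a..b, f x) ^ 2 ≤ (∫ x in a..b, (w x)⁻¹) * ∫ x in a..b, w x * f x ^ 2 := by
  have hf_int : IntervalIntegrable f volume a b := hf.intervalIntegrable_of_Icc hab
  have hwinv_int : IntervalIntegrable (fun x => (w x)⁻¹) volume a b :=
    (hw.inv₀ fun x hx => (hw0 x hx).ne').intervalIntegrable_of_Icc hab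
  have hwf_int : IntervalIntegrable (fun x => w x * f x ^ 2) volume a b :=
    (hw.mul (hf.pow 2)).intervalIntegrable_of_Icc hab
  -- `0 ≤ ∫ (w f - c)² / w` for every `c`, so the discriminant of this quadratic in `c` is `≤ 0`.
  have hquad : ∀ c : ℝ, 0 ≤ (∫ x in a..b, (w x)⁻¹) * (c * c)
      + (-2 * ∫ x in a..b, f x) * c + ∫ x in a..b, w x * f x ^ 2 := by
    intro c
    have hexpand : ∫ x in a..b, (w x * f x - c) ^ 2 / w x
        = ∫ x in a..b, (c * c * (w x)⁻¹ + (-2 * c) * f x + w x * f x ^ 2) := by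
      refine intervalIntegral.integral_congr fun x hx => ?_
      rw [uIcc_of_le hab] at hx
      have := (hw0 x hx).ne'
      field_simp
      ring
    rw [intervalIntegral.integral_add (hwinv_int.const_mul _ |>.add (hf_int.const_mul _)) hwf_int,
      intervalIntegral.integral_add (hwinv_int.const_mul _) (hf_int.const_mul _),
      intervalIntegral.integral_const_mul, intervalIntegral.integral_const_mul] at hexpand
    have hnonneg : 0 ≤ ∫ x in a..b, (w x * f x - c) ^ 2 / w x :=
      intervalIntegral.integral_nonneg hab fun x hx => div_nonneg (sq_nonneg _) (hw0 x hx).le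
    linarith
  have := discrim_le_zero hquad
  rw [discrim] at this
  linarith

theorem integral_sq_le_weighted_sobolev {f : ℝ → ℝ} (hf : ContDiff ℝ 1 f) :
    ∫ x in (0:ℝ)..1, f x ^ 2
      ≤ 100 * ∫ x in (0:ℝ)..1, (x * (1 - x)) ^ 2 * (f x ^ 2 + deriv f x ^ 2) := by
  have hfc : Continuous f := hf.continuous
  have hf'c : Continuous (deriv f) := hf.continuous_deriv le_rfl
  have hderiv : ∀ x, HasDerivAt f (deriv f x) x :=
    fun x => (hf.differentiable one_ne_zero x).hasDerivAt
  have hint : ∀ g : ℝ → ℝ, Continuous g → IntervalIntegrable g volume 0 1 :=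
    fun g hg => hg.intervalIntegrable 0 1
  have hboundary : ∫ x in (0:ℝ)..1,
      ((1 - 6 * (x * (1 - x))) * f x ^ 2 + 2 * (x * (1 - x) * (1 - 2 * x)) * (f x * deriv f x))
        = 0 := by
    rw [intervalIntegral.integral_eq_sub_of_hasDerivAt
      (f := fun x => x * (1 - x) * (1 - 2 * x) * f x ^ 2) (fun x _ => ?_) (hint _ (by fun_prop))]
    · norm_num
    · exact ((((hasDerivAt_id' x).mul ((hasDerivAt_id' x).const_sub 1)).mul
        (((hasDerivAt_id' x).const_mul 2).const_sub 1)).mul ((hderiv x).pow 2)).congr_deriv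
        (by simp only [Pi.mul_apply, Pi.pow_apply]; ring)
  -- The difference of the two sides is
  -- `(10 ω v + (1 - 2x) u)² + (4 (5 ω - 7/5)² + 4/25) u²` with `ω = x (1 - x)`.
  have hpointwise : ∀ x u v : ℝ, u ^ 2 ≤ 10 * ((1 - 6 * (x * (1 - x))) * u ^ 2
      + 2 * (x * (1 - x) * (1 - 2 * x)) * (u * v)) + 100 * ((x * (1 - x)) ^ 2 * (u ^ 2 + v ^ 2)) :=
    fun x u v => by
      nlinarith [sq_nonneg (10 * (x * (1 - x)) * v + (1 - 2 * x) * u),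
        sq_nonneg ((5 * (x * (1 - x)) - 7 / 5) * u)]
  calc ∫ x in (0:ℝ)..1, f x ^ 2
      ≤ ∫ x in (0:ℝ)..1, (10 * ((1 - 6 * (x * (1 - x))) * f x ^ 2
          + 2 * (x * (1 - x) * (1 - 2 * x)) * (f x * deriv f x))
          + 100 * ((x * (1 - x)) ^ 2 * (f x ^ 2 + deriv f x ^ 2))) :=
        intervalIntegral.integral_mono_on zero_le_one (hint _ (by fun_prop))
          (hint _ (by fun_prop)) fun x _ => hpointwise x (f x) (deriv f x)
    _ = 100 * ∫ x in (0:ℝ)..1, (x * (1 - x)) ^ 2 * (f x ^ 2 + deriv f x ^ 2) := by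
        rw [intervalIntegral.integral_add (hint _ (by fun_prop)) (hint _ (by fun_prop)),
          intervalIntegral.integral_const_mul, intervalIntegral.integral_const_mul, hboundary]
        ring

noncomputable def logit (t : ℝ) : ℝ := log t - log (1 - t)

@[fun_prop]
theorem measurable_logit : Measurable logit := by
  unfold logit
  fun_prop

theorem hasDerivAt_logit {t : ℝ} (h0 : 0 < t) (h1 : t < 1) :
    HasDerivAt logit (t * (1 - t))⁻¹ t := by
  have h1' : 1 - t ≠ 0 := by linarith
  exact ((hasDerivAt_log h0.ne').sub ((hasDerivAt_id' t).const_sub 1 |>.log h1')).congr_deriv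
    (by field_simp; ring)

theorem logit_le_logit {x y : ℝ} (hx : 0 < x) (hxy : x ≤ y) (hy : y < 1) :
    logit x ≤ logit y := by
  have := log_le_log hx hxy
  have := log_le_log (by linarith : 0 < 1 - y) (by linarith : 1 - y ≤ 1 - x)
  simp only [logit]
  linarith

theorem logit_one_sub (t : ℝ) : logit (1 - t) = -logit t := by
  simp only [logit, sub_sub_cancel, neg_sub]

theorem sq_sub_le_logit_sub_mul {f : ℝ → ℝ} (hf : ContDiff ℝ 1 f) {x y : ℝ} (hx : 0 < x)
    (hxy : x ≤ y) (hy : y < 1) :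
    (f y - f x) ^ 2 ≤ (logit y - logit x) * ∫ t in x..y, t * (1 - t) * deriv f t ^ 2 := by
  have hpos : ∀ t ∈ Icc x y, 0 < t * (1 - t) := fun t ht =>
    mul_pos (hx.trans_le ht.1) (by linarith [ht.2])
  have hlogit : ∀ t ∈ Icc x y, HasDerivAt logit (t * (1 - t))⁻¹ t := fun t ht =>
    hasDerivAt_logit (hx.trans_le ht.1) (ht.2.trans_lt hy)
  have hweight : ∫ t in x..y, (t * (1 - t))⁻¹ = logit y - logit x :=
    intervalIntegral.integral_eq_sub_of_hasDerivAt_of_le hxy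
      (fun t ht => (hlogit t ht).continuousAt.continuousWithinAt)
      (fun t ht => hlogit t (Ioo_subset_Icc_self ht))
      (ContinuousOn.intervalIntegrable_of_Icc hxy
        (continuousOn_id.mul (continuousOn_const.sub continuousOn_id) |>.inv₀
          fun t ht => (hpos t ht).ne'))
  have hf' : Continuous (deriv f) := hf.continuous_deriv le_rfl
  rw [← hweight, ← intervalIntegral.integral_deriv_eq_sub
    (fun t _ => hf.differentiable one_ne_zero t) (hf'.intervalIntegrable _ _)]
  exact sq_intervalIntegral_le_mul hxy hf'.continuousOn (by fun_prop) hpos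

theorem two_mul_log_le_sub_inv {u : ℝ} (hu : 1 ≤ u) : 2 * log u ≤ u - u⁻¹ := by
  have := self_le_sinh_iff.2 (log_nonneg hu)
  rw [sinh_log (by linarith)] at this
  linarith

theorem logit_sub_mul_le {s y : ℝ} (hs : 0 < s) (hsy : s < y) (hy : y < 1) :
    (logit y - logit s) * ((y - s)⁻¹ - y⁻¹)
      ≤ √(s / (1 - s)) * √((1 - y) / y) / (y * (1 - y)) := by
  set G := √(s / (1 - s))
  set H := √((1 - y) / y)
  have hy0 : 0 < y := hs.trans hsy
  have hs1 : 0 < 1 - s := by linarith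
  have hy1 : 0 < 1 - y := by linarith
  have hG : 0 < G := sqrt_pos.2 (div_pos hs hs1)
  have hH : 0 < H := sqrt_pos.2 (div_pos hy1 hy0)
  have hG2 : G ^ 2 = s / (1 - s) := sq_sqrt (div_pos hs hs1).le
  have hH2 : H ^ 2 = (1 - y) / y := sq_sqrt (div_pos hy1 hy0).le
  have hGH : G * H ≤ 1 := by
    rw [← abs_of_pos (mul_pos hG hH), ← sq_le_one_iff_abs_le_one, mul_pow, hG2, hH2,
      div_mul_div_comm, div_le_one (by positivity)]
    nlinarith
  have hlogit : logit y - logit s = 2 * log (G * H)⁻¹ := by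
    rw [log_inv, log_mul hG.ne' hH.ne', log_sqrt (div_pos hs hs1).le,
      log_sqrt (div_pos hy1 hy0).le, log_div hs.ne' hs1.ne', log_div hy1.ne' hy0.ne', logit,
      logit]
    ring
  calc (logit y - logit s) * ((y - s)⁻¹ - y⁻¹)
      ≤ ((G * H)⁻¹ - (G * H)⁻¹⁻¹) * ((y - s)⁻¹ - y⁻¹) := by
        rw [hlogit]
        refine mul_le_mul_of_nonneg_right (two_mul_log_le_sub_inv ?_) ?_
        · exact one_le_inv_iff₀.2 ⟨mul_pos hG hH, hGH⟩
        · exact sub_nonneg.2 (inv_anti₀ (by linarith) (by linarith))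
    _ = G * H / (y * (1 - y)) := by
        have hys : y - s ≠ 0 := by linarith
        field_simp
        field_simp at hG2 hH2
        linear_combination (-(H ^ 2 * y)) * hG2 - s * hH2

theorem lintegral_logit_sub_mul_le_right {s : ℝ} (hs0 : 0 < s) (hs1 : s < 1) :
    ∫⁻ y in Ioo s 1, ENNReal.ofReal ((logit y - logit s) * ((y - s)⁻¹ - y⁻¹)) ≤ 2 := by
  set G := √(s / (1 - s))
  have hderiv : ∀ y ∈ Ioo s 1, HasDerivAt (fun y => -2 * G * √((1 - y) / y))
      (G * √((1 - y) / y) / (y * (1 - y))) y := by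
    intro y ⟨hsy, hy1⟩
    have hy0 : 0 < y := hs0.trans hsy
    have hq : 0 < (1 - y) / y := div_pos (by linarith) hy0
    have hH2 : √((1 - y) / y) ^ 2 = (1 - y) / y := sq_sqrt hq.le
    have hH : 0 < √((1 - y) / y) := sqrt_pos.2 hq
    refine ((((hasDerivAt_id' y).const_sub 1).div (hasDerivAt_id' y) hy0.ne').sqrt
      hq.ne' |>.const_mul (-2 * G)).congr_deriv ?_
    simp only [Pi.div_apply]
    field_simp
    field_simp at hH2
    linear_combination (-G) * hH2
  have hcont : ContinuousOn (fun y => -2 * G * √((1 - y) / y)) (Icc s 1) :=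
    continuousOn_const.mul ((continuousOn_const.sub continuousOn_id).div continuousOn_id
      fun y hy => (hs0.trans_le hy.1).ne').sqrt
  have hvalue : -2 * G * √((1 - 1) / 1) - -2 * G * √((1 - s) / s) = 2 := by
    have hGH : G * √((1 - s) / s) = 1 := by
      rw [← sqrt_mul (div_pos hs0 (by linarith)).le, div_mul_div_comm, mul_comm s,
        div_self (mul_pos (by linarith) hs0).ne', sqrt_one]
    rw [sub_self, zero_div, sqrt_zero]
    linear_combination 2 * hGH
  calc ∫⁻ y in Ioo s 1, ENNReal.ofReal ((logit y - logit s) * ((y - s)⁻¹ - y⁻¹))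
      ≤ ∫⁻ y in Ioo s 1, ENNReal.ofReal (G * √((1 - y) / y) / (y * (1 - y))) :=
        setLIntegral_mono' measurableSet_Ioo fun y hy =>
          ENNReal.ofReal_le_ofReal (logit_sub_mul_le hs0 hy.1 hy.2)
    _ = 2 := by
        rw [lintegral_Ioo_ofReal_eq_sub hs1.le hcont hderiv fun y hy => ?_, hvalue,
          ENNReal.ofReal_ofNat]
        have : 0 < y * (1 - y) := mul_pos (hs0.trans hy.1) (by linarith [hy.2])
        positivity

theorem lintegral_logit_sub_mul_le_left {s : ℝ} (hs0 : 0 < s) (hs1 : s < 1) :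
    ∫⁻ x in Ioo 0 s, ENNReal.ofReal ((logit s - logit x) * ((s - x)⁻¹ - (1 - x)⁻¹)) ≤ 2 := by
  set φ : ℝ → ℝ≥0∞ := (Ioo (1 - s) 1).indicator
    fun y => ENNReal.ofReal ((logit y - logit (1 - s)) * ((y - (1 - s))⁻¹ - y⁻¹))
  have hreflect : ∀ x, (Ioo 0 s).indicator
      (fun x => ENNReal.ofReal ((logit s - logit x) * ((s - x)⁻¹ - (1 - x)⁻¹))) x = φ (1 - x) := by
    intro x
    have hmem : 1 - x ∈ Ioo (1 - s) 1 ↔ x ∈ Ioo 0 s := by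
      simp only [mem_Ioo]
      constructor <;> rintro ⟨h1, h2⟩ <;> constructor <;> linarith
    simp only [φ, indicator, hmem, logit_one_sub, sub_sub_sub_cancel_left, neg_sub_neg]
  rw [← lintegral_indicator measurableSet_Ioo, funext hreflect, lintegral_sub_left_eq_self φ 1,
    lintegral_indicator measurableSet_Ioo]
  exact lintegral_logit_sub_mul_le_right (by linarith) (by linarith)

theorem lintegral_Ioo_inv_sq_sub_const {x a b : ℝ} (hxa : x < a) (hab : a ≤ b) :
    ∫⁻ y in Ioo a b, ENNReal.ofReal (((y - x) ^ 2)⁻¹)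
      = ENNReal.ofReal ((a - x)⁻¹ - (b - x)⁻¹) := by
  have hne : ∀ y ∈ Icc a b, y - x ≠ 0 := fun y hy => by linarith [hy.1]
  rw [lintegral_Ioo_ofReal_eq_sub (F := fun y => -(y - x)⁻¹) hab
    ((continuousOn_id.sub continuousOn_const).inv₀ hne).neg
    (fun y hy => (((hasDerivAt_id' y).sub_const x).inv (hne y (Ioo_subset_Icc_self hy))).neg
      |>.congr_deriv (by simp [div_eq_mul_inv]))
    fun y _ => by positivity, neg_sub_neg]

theorem lintegral_Ioo_inv_sq_const_sub {y a b : ℝ} (hab : a ≤ b) (hby : b < y) :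
    ∫⁻ x in Ioo a b, ENNReal.ofReal (((y - x) ^ 2)⁻¹)
      = ENNReal.ofReal ((y - b)⁻¹ - (y - a)⁻¹) := by
  have hne : ∀ x ∈ Icc a b, y - x ≠ 0 := fun x hx => by linarith [hx.2]
  exact lintegral_Ioo_ofReal_eq_sub (F := fun x => (y - x)⁻¹) hab
    ((continuousOn_const.sub continuousOn_id).inv₀ hne)
    (fun x hx => ((hasDerivAt_id' x).const_sub y).inv (hne x (Ioo_subset_Icc_self hx))
      |>.congr_deriv (by simp [div_eq_mul_inv]))
    fun x _ => by positivity

noncomputable def gagliardoKernel (p : ℝ × ℝ) : ℝ :=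
  (logit (max p.1 p.2) - logit (min p.1 p.2)) / (p.1 - p.2) ^ 2

@[fun_prop]
theorem measurable_gagliardoKernel : Measurable gagliardoKernel := by
  unfold gagliardoKernel
  fun_prop

theorem gagliardoKernel_swap (p : ℝ × ℝ) : gagliardoKernel p.swap = gagliardoKernel p := by
  simp only [gagliardoKernel, Prod.fst_swap, Prod.snd_swap, max_comm p.2, min_comm p.2,
    sub_sq_comm p.2]

theorem lintegral_gagliardoKernel_Ioo_prod_le {s : ℝ} (hs0 : 0 < s) (hs1 : s < 1) :
    ∫⁻ p in Ioo 0 s ×ˢ Ioo s 1, ENNReal.ofReal (gagliardoKernel p) ≤ 4 := by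
  have hsplit : ∀ p ∈ Ioo 0 s ×ˢ Ioo s 1, ENNReal.ofReal (gagliardoKernel p)
      = ENNReal.ofReal (logit p.2 - logit s) * ENNReal.ofReal (((p.2 - p.1) ^ 2)⁻¹)
        + ENNReal.ofReal (logit s - logit p.1) * ENNReal.ofReal (((p.2 - p.1) ^ 2)⁻¹) := by
    rintro ⟨x, y⟩ ⟨⟨hx0, hxs⟩, ⟨hsy, hy1⟩⟩
    have hxy : x ≤ y := by linarith
    have hys := sub_nonneg.2 (logit_le_logit hs0 hsy.le hy1)
    have hsx := sub_nonneg.2 (logit_le_logit hx0 hxs.le hs1)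
    rw [← ENNReal.ofReal_mul hys, ← ENNReal.ofReal_mul hsx,
      ← ENNReal.ofReal_add (mul_nonneg hys (by positivity)) (mul_nonneg hsx (by positivity)),
      gagliardoKernel, max_eq_right hxy, min_eq_left hxy, sub_sq_comm x y]
    congr 1
    ring
  rw [setLIntegral_congr_fun (measurableSet_Ioo.prod measurableSet_Ioo) hsplit,
    lintegral_add_left (by fun_prop), Measure.volume_eq_prod, ← Measure.prod_restrict,
    lintegral_prod_symm _ (by fun_prop), lintegral_prod _ (by fun_prop)]
  calc (∫⁻ y in Ioo s 1, ∫⁻ x in Ioo 0 s,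
        ENNReal.ofReal (logit y - logit s) * ENNReal.ofReal (((y - x) ^ 2)⁻¹))
      + ∫⁻ x in Ioo 0 s, ∫⁻ y in Ioo s 1,
        ENNReal.ofReal (logit s - logit x) * ENNReal.ofReal (((y - x) ^ 2)⁻¹)
      = (∫⁻ y in Ioo s 1, ENNReal.ofReal ((logit y - logit s) * ((y - s)⁻¹ - y⁻¹)))
        + ∫⁻ x in Ioo 0 s, ENNReal.ofReal ((logit s - logit x) * ((s - x)⁻¹ - (1 - x)⁻¹)) := by
        congr 1
        · refine setLIntegral_congr_fun measurableSet_Ioo fun y hy => ?_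
          rw [lintegral_const_mul _ (by fun_prop), lintegral_Ioo_inv_sq_const_sub hs0.le hy.1,
            sub_zero, ← ENNReal.ofReal_mul (sub_nonneg.2 (logit_le_logit hs0 hy.1.le hy.2))]
        · refine setLIntegral_congr_fun measurableSet_Ioo fun x hx => ?_
          rw [lintegral_const_mul _ (by fun_prop), lintegral_Ioo_inv_sq_sub_const hx.2 hs1.le,
            ← ENNReal.ofReal_mul (sub_nonneg.2 (logit_le_logit hx.1 hx.2.le hs1))]
    _ ≤ 2 + 2 := add_le_add (lintegral_logit_sub_mul_le_right hs0 hs1)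
        (lintegral_logit_sub_mul_le_left hs0 hs1)
    _ = 4 := by norm_num

def straddling (s : ℝ) : Set (ℝ × ℝ) := {p | min p.1 p.2 < s ∧ s < max p.1 p.2}

theorem measurableSet_straddling (s : ℝ) : MeasurableSet (straddling s) :=
  (measurableSet_lt (by fun_prop : Measurable fun p : ℝ × ℝ => min p.1 p.2)
    measurable_const).inter
  (measurableSet_lt measurable_const (by fun_prop : Measurable fun p : ℝ × ℝ => max p.1 p.2))

theorem straddling_inter_Ioo_prod {s : ℝ} (hs : s ∉ Ioo 0 1) :
    straddling s ∩ (Ioo 0 1 ×ˢ Ioo 0 1) = ∅ :=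
  eq_empty_of_forall_notMem fun _ ⟨⟨hmin, hmax⟩, ⟨hx0, hx1⟩, ⟨hy0, hy1⟩⟩ =>
    hs ⟨(lt_min hx0 hy0).trans hmin, hmax.trans (max_lt hx1 hy1)⟩

theorem lintegral_gagliardoKernel_straddling_le {s : ℝ} (hs0 : 0 < s) (hs1 : s < 1) :
    ∫⁻ p in straddling s ∩ (Ioo 0 1 ×ˢ Ioo 0 1), ENNReal.ofReal (gagliardoKernel p) ≤ 8 := by
  have hsub : straddling s ∩ (Ioo 0 1 ×ˢ Ioo 0 1) ⊆ Ioo 0 s ×ˢ Ioo s 1 ∪ Ioo s 1 ×ˢ Ioo 0 s := by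
    rintro ⟨x, y⟩ ⟨⟨hmin, hmax⟩, ⟨hx0, hx1⟩, ⟨hy0, hy1⟩⟩
    rcases le_total x y with hxy | hyx
    · rw [min_eq_left hxy] at hmin
      rw [max_eq_right hxy] at hmax
      exact Or.inl ⟨⟨hx0, hmin⟩, hmax, hy1⟩
    · rw [min_eq_right hyx] at hmin
      rw [max_eq_left hyx] at hmax
      exact Or.inr ⟨⟨hmax, hx1⟩, hy0, hmin⟩
  have hswap : ∫⁻ p in Ioo s 1 ×ˢ Ioo 0 s, ENNReal.ofReal (gagliardoKernel p)
      = ∫⁻ p in Ioo 0 s ×ˢ Ioo s 1, ENNReal.ofReal (gagliardoKernel p) := by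
    simp only [Measure.volume_eq_prod, ← Measure.prod_restrict]
    rw [← lintegral_prod_swap]
    simp only [gagliardoKernel_swap]
  calc _ ≤ ∫⁻ p in Ioo 0 s ×ˢ Ioo s 1 ∪ Ioo s 1 ×ˢ Ioo 0 s, ENNReal.ofReal (gagliardoKernel p) :=
        lintegral_mono_set hsub
    _ ≤ 4 + 4 := by
        refine (lintegral_union_le _ _ _).trans ?_
        rw [hswap]
        exact add_le_add (lintegral_gagliardoKernel_Ioo_prod_le hs0 hs1)
          (lintegral_gagliardoKernel_Ioo_prod_le hs0 hs1)
    _ = 8 := by norm_num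

theorem ofReal_div_sq_le_gagliardoKernel_mul {f : ℝ → ℝ} (hf : ContDiff ℝ 1 f) {p : ℝ × ℝ}
    (hp : p ∈ Ioo 0 1 ×ˢ Ioo 0 1) :
    ENNReal.ofReal ((f p.1 - f p.2) ^ 2 / (p.1 - p.2) ^ 2)
      ≤ ENNReal.ofReal (gagliardoKernel p) * ∫⁻ t in Ioo (min p.1 p.2) (max p.1 p.2),
        ENNReal.ofReal (t * (1 - t) * deriv f t ^ 2) := by
  obtain ⟨⟨hx0, hx1⟩, ⟨hy0, hy1⟩⟩ := hp
  have hm : 0 < min p.1 p.2 := lt_min hx0 hy0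
  have hM : max p.1 p.2 < 1 := max_lt hx1 hy1
  have hmM : min p.1 p.2 ≤ max p.1 p.2 := min_le_max
  have hsq : (f p.1 - f p.2) ^ 2 = (f (max p.1 p.2) - f (min p.1 p.2)) ^ 2 := by
    rcases le_total p.1 p.2 with h | h
    · rw [max_eq_right h, min_eq_left h, sub_sq_comm]
    · rw [max_eq_left h, min_eq_right h]
  have hD : Continuous fun t => t * (1 - t) * deriv f t ^ 2 := by
    have := hf.continuous_deriv le_rfl
    fun_prop
  have hDnonneg : ∀ t ∈ Ioo (min p.1 p.2) (max p.1 p.2), 0 ≤ t * (1 - t) * deriv f t ^ 2 :=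
    fun t ht => mul_nonneg (mul_nonneg (hm.trans ht.1).le (by linarith [ht.2])) (sq_nonneg _)
  rw [← ofReal_integral_eq_lintegral_ofReal (hD.integrableOn_Icc.mono_set Ioo_subset_Icc_self)
      ((ae_restrict_iff' measurableSet_Ioo).2 (ae_of_all _ hDnonneg)),
    ← ENNReal.ofReal_mul' (setIntegral_nonneg measurableSet_Ioo hDnonneg),
    setIntegral_Ioo_eq_intervalIntegral hmM, gagliardoKernel, div_mul_eq_mul_div, hsq]
  exact ENNReal.ofReal_le_ofReal
    (div_le_div_of_nonneg_right (sq_sub_le_logit_sub_mul hf hm hmM hM) (sq_nonneg _))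

theorem lintegral_gagliardo_le_weighted_dirichlet {f : ℝ → ℝ} (hf : ContDiff ℝ 1 f) :
    ∫⁻ p in Ioo 0 1 ×ˢ Ioo 0 1, ENNReal.ofReal ((f p.1 - f p.2) ^ 2 / (p.1 - p.2) ^ 2)
      ≤ 8 * ∫⁻ t in Ioo 0 1, ENNReal.ofReal (t * (1 - t) * deriv f t ^ 2) := by
  set D : ℝ → ℝ≥0∞ := fun t => ENNReal.ofReal (t * (1 - t) * deriv f t ^ 2)
  have hD : Measurable D := by
    have := (hf.continuous_deriv le_rfl).measurable
    fun_prop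
  set Z : Set ((ℝ × ℝ) × ℝ) := {z | min z.1.1 z.1.2 < z.2 ∧ z.2 < max z.1.1 z.1.2}
  have hZ : MeasurableSet Z :=
    (measurableSet_lt (by fun_prop : Measurable fun z : (ℝ × ℝ) × ℝ => min z.1.1 z.1.2)
      measurable_snd).inter
    (measurableSet_lt measurable_snd
      (by fun_prop : Measurable fun z : (ℝ × ℝ) × ℝ => max z.1.1 z.1.2))
  set F : ℝ × ℝ → ℝ → ℝ≥0∞ :=
    fun p t => Z.indicator (fun z => ENNReal.ofReal (gagliardoKernel z.1) * D z.2) (p, t)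
  have hF : Measurable (Function.uncurry F) := Measurable.indicator (by fun_prop) hZ
  have hFp : ∀ p, ∫⁻ t, F p t
      = ENNReal.ofReal (gagliardoKernel p) * ∫⁻ t in Ioo (min p.1 p.2) (max p.1 p.2), D t :=
    fun p => by
      rw [← lintegral_const_mul _ hD, ← lintegral_indicator measurableSet_Ioo]
      rfl
  have hFt : ∀ t, ∫⁻ p in Ioo 0 1 ×ˢ Ioo 0 1, F p t
      = (∫⁻ p in straddling t ∩ (Ioo 0 1 ×ˢ Ioo 0 1), ENNReal.ofReal (gagliardoKernel p)) * D t :=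
    fun t => by
      rw [← lintegral_mul_const _ (by fun_prop), ← Measure.restrict_restrict
        (measurableSet_straddling t), ← lintegral_indicator (measurableSet_straddling t)]
      rfl
  calc ∫⁻ p in Ioo 0 1 ×ˢ Ioo 0 1, ENNReal.ofReal ((f p.1 - f p.2) ^ 2 / (p.1 - p.2) ^ 2)
      ≤ ∫⁻ p in Ioo 0 1 ×ˢ Ioo 0 1, ∫⁻ t, F p t :=
        setLIntegral_mono' (measurableSet_Ioo.prod measurableSet_Ioo) fun p hp =>
          (hFp p).symm ▸ ofReal_div_sq_le_gagliardoKernel_mul hf hp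
    _ = ∫⁻ t, ∫⁻ p in Ioo 0 1 ×ˢ Ioo 0 1, F p t := lintegral_lintegral_swap hF.aemeasurable
    _ ≤ ∫⁻ t, (Ioo 0 1).indicator (fun t => 8 * D t) t := by
        refine lintegral_mono fun t => ?_
        rw [hFt]
        by_cases ht : t ∈ Ioo 0 1
        · rw [indicator_of_mem ht]
          exact mul_le_mul_left (lintegral_gagliardoKernel_straddling_le ht.1 ht.2) _
        · rw [straddling_inter_Ioo_prod ht, Measure.restrict_empty, lintegral_zero_measure,
            zero_mul]
          exact zero_le
    _ = 8 * ∫⁻ t in Ioo 0 1, D t := by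
        rw [lintegral_indicator measurableSet_Ioo, lintegral_const_mul _ hD]

theorem gagliardoSq_le_weighted_dirichlet {f : ℝ → ℝ} (hf : ContDiff ℝ 1 f) :
    gagliardoSq f ≤ 8 * ∫ t in (0:ℝ)..1, t * (1 - t) * deriv f t ^ 2 := by
  have hfc := hf.continuous
  have hf'c := hf.continuous_deriv le_rfl
  have hD : ∀ t ∈ Icc (0:ℝ) 1, 0 ≤ t * (1 - t) * deriv f t ^ 2 :=
    fun t ht => mul_nonneg (mul_nonneg ht.1 (by linarith [ht.2])) (sq_nonneg _)
  rw [gagliardoSq, integral_eq_lintegral_of_nonneg_ae (ae_of_all _ fun p => by positivity)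
    (Measurable.aestronglyMeasurable (by fun_prop))]
  refine ENNReal.toReal_le_of_le_ofReal
    (mul_nonneg (by norm_num) (intervalIntegral.integral_nonneg zero_le_one hD))
    ((lintegral_gagliardo_le_weighted_dirichlet hf).trans_eq ?_)
  rw [← ofReal_integral_eq_lintegral_ofReal
      ((Continuous.integrableOn_Icc (by fun_prop)).mono_set Ioo_subset_Icc_self)
      ((ae_restrict_iff' measurableSet_Ioo).2
        (ae_of_all _ fun t ht => hD t (Ioo_subset_Icc_self ht))),
    ENNReal.ofReal_mul (by norm_num), ENNReal.ofReal_ofNat,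
    setIntegral_Ioo_eq_intervalIntegral zero_le_one]

theorem mul_one_sub_le_min {x : ℝ} (hx : x ∈ Icc (0:ℝ) 1) : x * (1 - x) ≤ min x (1 - x) :=
  le_min (by nlinarith [hx.1, hx.2]) (by nlinarith [hx.1, hx.2])

theorem integral_sq_le_min_sq {f : ℝ → ℝ} (hf : ContDiff ℝ 1 f) :
    ∫ x in (0:ℝ)..1, f x ^ 2
      ≤ 100 * ∫ x in (0:ℝ)..1, min x (1 - x) ^ 2 * (f x ^ 2 + deriv f x ^ 2) := by
  have hfc := hf.continuous
  have hf'c := hf.continuous_deriv le_rfl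
  refine (integral_sq_le_weighted_sobolev hf).trans (mul_le_mul_of_nonneg_left
    (intervalIntegral.integral_mono_on zero_le_one
      ((by fun_prop : Continuous _).intervalIntegrable _ _)
      ((by fun_prop : Continuous _).intervalIntegrable _ _) fun x hx => ?_) (by norm_num))
  have : 0 ≤ x * (1 - x) := mul_nonneg hx.1 (by linarith [hx.2])
  exact mul_le_mul_of_nonneg_right (pow_le_pow_left₀ this (mul_one_sub_le_min hx) 2)
    (by positivity)

theorem gagliardoSq_le_min {f : ℝ → ℝ} (hf : ContDiff ℝ 1 f) :
    gagliardoSq f ≤ 8 * ∫ x in (0:ℝ)..1, min x (1 - x) * (f x ^ 2 + deriv f x ^ 2) := by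
  have hfc := hf.continuous
  have hf'c := hf.continuous_deriv le_rfl
  refine (gagliardoSq_le_weighted_dirichlet hf).trans (mul_le_mul_of_nonneg_left
    (intervalIntegral.integral_mono_on zero_le_one
      ((by fun_prop : Continuous _).intervalIntegrable _ _)
      ((by fun_prop : Continuous _).intervalIntegrable _ _) fun x hx => ?_) (by norm_num))
  have : 0 ≤ x * (1 - x) := mul_nonneg hx.1 (by linarith [hx.2])
  exact mul_le_mul (mul_one_sub_le_min hx) (le_add_of_nonneg_left (sq_nonneg _)) (sq_nonneg _)
    (this.trans (mul_one_sub_le_min hx))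

theorem integral_min_sq_mul_le {g : ℝ → ℝ} (hg : Continuous g) (hg0 : ∀ x, 0 ≤ g x) :
    ∫ x in (0:ℝ)..1, min x (1 - x) ^ 2 * g x ≤ 1 / 2 * ∫ x in (0:ℝ)..1, min x (1 - x) * g x := by
  rw [← intervalIntegral.integral_const_mul]
  refine intervalIntegral.integral_mono_on zero_le_one
    ((by fun_prop : Continuous _).intervalIntegrable _ _)
    ((by fun_prop : Continuous _).intervalIntegrable _ _) fun x hx => ?_
  have h0 : 0 ≤ min x (1 - x) := le_min hx.1 (by linarith [hx.2])
  have h1 : min x (1 - x) ≤ 1 / 2 := min_le_iff.2 (by by_contra!; linarith)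
  nlinarith [mul_nonneg (mul_nonneg h0 (sub_nonneg.2 h1)) (hg0 x)]

end WeightedSobolev

/-- Weighted Sobolev embedding `H^1_{d^p}(0,1) ↪ H^{1-p/2}(0,1)` for `p = 1, 2`,
where `d x = min x (1-x)`: for `p = 1` the `H^{1/2}` norm (squared, realized via the
Gagliardo seminorm) of `R` is controlled by `∫ d (R² + R'²)`, and for `p = 2` the
`L²` norm (squared) of `R` is controlled by `∫ d² (R² + R'²)`. -/
theorem weighted_sobolev_embedding :
    ∃ C > (0:ℝ), ∀ R : ℝ → ℝ, ContDiff ℝ 1 R →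
      ((∫ x in Set.Ioo (0:ℝ) 1, (R x) ^ 2) + gagliardoSq R
          ≤ C * ∫ x in Set.Ioo (0:ℝ) 1, (min x (1 - x)) * ((R x) ^ 2 + (deriv R x) ^ 2)) ∧
      ((∫ x in Set.Ioo (0:ℝ) 1, (R x) ^ 2)
          ≤ C * ∫ x in Set.Ioo (0:ℝ) 1, (min x (1 - x)) ^ 2 * ((R x) ^ 2 + (deriv R x) ^ 2)) := by
  refine ⟨100, by norm_num, fun R hR => ?_⟩
  simp only [WeightedSobolev.setIntegral_Ioo_eq_intervalIntegral zero_le_one]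
  have hL2 := WeightedSobolev.integral_sq_le_min_sq hR
  have hG := WeightedSobolev.gagliardoSq_le_min hR
  have hRc := hR.continuous
  have hR'c := hR.continuous_deriv le_rfl
  have hp2_le_p1 := WeightedSobolev.integral_min_sq_mul_le
    (g := fun x => R x ^ 2 + deriv R x ^ 2) (by fun_prop) fun x => by positivity
  have hp1 : 0 ≤ ∫ x in (0:ℝ)..1, min x (1 - x) * (R x ^ 2 + deriv R x ^ 2) :=
    intervalIntegral.integral_nonneg zero_le_one fun x hx =>
      mul_nonneg (le_min hx.1 (by linarith [hx.2])) (by positivity)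
  exact ⟨by linarith, hL2⟩
end

section
/- Let ρ_0 ∈ C^1([0,1]) with ρ_0(0) = ρ_0(1) = 0. Suppose there exist α > 0 and constants C, C_α > 0 such that |ρ_0'(x)| ≥ C whenever min(x,1−x) ≤ α, and ρ_0(x) ≥ C_α whenever min(x,1−x) ≥ α, and ρ_0 > 0 on (0,1). Then for every u ∈ C^1([0,1]): ‖u'‖_{L^2(0,1)}^2 ≤ C'(‖ρ_0 u''‖_{L^2}^2 + ‖ρ_0' u'‖_{L^2}^2 + ‖ρ_0 u'‖_{L^2}^2) for a constant C' depending only on ρ_0. -/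
/-!
The two hypotheses on `ρ0` cover `[0,1]`: near the boundary `|ρ0'| ≥ C`, in the interior
`ρ0 ≥ Cα`. Hence pointwise `u'² ≤ max (C⁻²) (Cα⁻²) (ρ0'² u'² + ρ0² u'²)`, and integrating gives
the bound; the term `‖ρ0 u''‖²` is not even needed.
-/

open MeasureTheory Set

lemma sq_le_inv_sq_mul_sq_of_le_abs {C a : ℝ} (hC : 0 < C) (h : C ≤ |a|) (c : ℝ) :
    c ^ 2 ≤ (C ^ 2)⁻¹ * (a * c) ^ 2 := by
  rw [le_inv_mul_iff₀ (by positivity), mul_pow, ← sq_abs a]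
  gcongr

lemma sq_le_max_inv_sq_mul_add_of_le_abs_or {C D a b : ℝ} (hC : 0 < C) (hD : 0 < D)
    (h : C ≤ |a| ∨ D ≤ |b|) (c : ℝ) :
    c ^ 2 ≤ max (C ^ 2)⁻¹ (D ^ 2)⁻¹ * ((a * c) ^ 2 + (b * c) ^ 2) := by
  have hac := sq_nonneg (a * c)
  have hbc := sq_nonneg (b * c)
  rcases h with ha | hb
  · calc c ^ 2 ≤ (C ^ 2)⁻¹ * (a * c) ^ 2 := sq_le_inv_sq_mul_sq_of_le_abs hC ha c
      _ ≤ _ := by gcongr; exacts [le_max_left _ _, le_add_of_nonneg_right hbc]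
  · calc c ^ 2 ≤ (D ^ 2)⁻¹ * (b * c) ^ 2 := sq_le_inv_sq_mul_sq_of_le_abs hD hb c
      _ ≤ _ := by gcongr; exacts [le_max_right _ _, le_add_of_nonneg_left hac]

lemma integral_sq_le_of_le_abs_or {X : Type*} [MeasurableSpace X] {μ : Measure X}
    {f v w : X → ℝ} {C D : ℝ} (hC : 0 < C) (hD : 0 < D)
    (hv : Integrable (fun x => (v x * f x) ^ 2) μ) (hw : Integrable (fun x => (w x * f x) ^ 2) μ)
    (hcover : ∀ᵐ x ∂μ, C ≤ |v x| ∨ D ≤ |w x|) :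
    ∫ x, f x ^ 2 ∂μ ≤
      max (C ^ 2)⁻¹ (D ^ 2)⁻¹ * ((∫ x, (v x * f x) ^ 2 ∂μ) + ∫ x, (w x * f x) ^ 2 ∂μ) := by
  rw [← integral_add hv hw, ← integral_const_mul]
  refine integral_mono_of_nonneg (.of_forall fun x => sq_nonneg _) ((hv.add hw).const_mul _) ?_
  filter_upwards [hcover] with x hx
  exact sq_le_max_inv_sq_mul_add_of_le_abs_or hC hD hx (f x)

lemma integrableOn_Ioo_sq_mul {g h : ℝ → ℝ} {a b : ℝ} (hg : ContinuousOn g (Icc a b))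
    (hh : ContinuousOn h (Icc a b)) : IntegrableOn (fun x => (g x * h x) ^ 2) (Ioo a b) :=
  (((hg.mul hh).pow 2).integrableOn_compact isCompact_Icc).mono_set Ioo_subset_Icc_self

theorem unweighted_from_weighted_general (ρ0 : ℝ → ℝ) (α C Cα : ℝ)
    (hC : 0 < C) (hCα : 0 < Cα)
    (hρ0 : ContDiffOn ℝ 1 ρ0 (Set.Icc 0 1))
    (hder : ∀ x ∈ Set.Icc (0:ℝ) 1, min x (1 - x) ≤ α →
      C ≤ |derivWithin ρ0 (Set.Icc 0 1) x|)
    (hint : ∀ x ∈ Set.Icc (0:ℝ) 1, α ≤ min x (1 - x) → Cα ≤ ρ0 x) :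
    ∃ C' > (0:ℝ), ∀ u : ℝ → ℝ, ContDiff ℝ 2 u →
      (∫ x in Set.Ioo (0:ℝ) 1, (deriv u x) ^ 2)
        ≤ C' * ((∫ x in Set.Ioo (0:ℝ) 1, (ρ0 x * iteratedDeriv 2 u x) ^ 2)
            + (∫ x in Set.Ioo (0:ℝ) 1, (derivWithin ρ0 (Set.Icc 0 1) x * deriv u x) ^ 2)
            + (∫ x in Set.Ioo (0:ℝ) 1, (ρ0 x * deriv u x) ^ 2)) := by
  refine ⟨max (C ^ 2)⁻¹ (Cα ^ 2)⁻¹, lt_max_of_lt_left (by positivity), fun u hu => ?_⟩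
  have hu' : ContinuousOn (deriv u) (Icc 0 1) := (hu.continuous_deriv one_le_two).continuousOn
  have hρ0' : ContinuousOn (derivWithin ρ0 (Icc 0 1)) (Icc 0 1) :=
    hρ0.continuousOn_derivWithin (uniqueDiffOn_Icc one_pos) le_rfl
  have hcover : ∀ᵐ x ∂volume.restrict (Ioo (0:ℝ) 1),
      C ≤ |derivWithin ρ0 (Icc 0 1) x| ∨ Cα ≤ |ρ0 x| := by
    refine ae_restrict_of_forall_mem measurableSet_Ioo fun x hx => ?_
    replace hx := Ioo_subset_Icc_self hx
    rcases le_total (min x (1 - x)) α with hnear | hfar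
    · exact .inl (hder x hx hnear)
    · exact .inr ((hint x hx hfar).trans (le_abs_self _))
  have hweighted := integral_sq_le_of_le_abs_or hC hCα (integrableOn_Ioo_sq_mul hρ0' hu')
    (integrableOn_Ioo_sq_mul hρ0.continuousOn hu') hcover
  have hsecond : 0 ≤ ∫ x in Ioo (0:ℝ) 1, (ρ0 x * iteratedDeriv 2 u x) ^ 2 :=
    setIntegral_nonneg measurableSet_Ioo fun _ _ => sq_nonneg _
  exact hweighted.trans (mul_le_mul_of_nonneg_left (by linarith) (by positivity))

/-- Converting weighted bounds into an unweighted bound using the physical vacuum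
structure: if `|ρ0'| ≥ C` near the boundary and `ρ0 ≥ C_α` in the interior, then
`‖u'‖_{L²}² ≤ C' (‖ρ0 u''‖_{L²}² + ‖ρ0' u'‖_{L²}² + ‖ρ0 u'‖_{L²}²)` for every `u`,
with `C'` depending only on `ρ0`. -/
theorem unweighted_from_weighted (ρ0 : ℝ → ℝ) (α C Cα : ℝ)
    (hα : 0 < α) (hC : 0 < C) (hCα : 0 < Cα)
    (hρ0 : ContDiffOn ℝ 1 ρ0 (Set.Icc 0 1))
    (h00 : ρ0 0 = 0) (h01 : ρ0 1 = 0)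
    (hpos : ∀ x ∈ Set.Ioo (0:ℝ) 1, 0 < ρ0 x)
    (hder : ∀ x ∈ Set.Icc (0:ℝ) 1, min x (1 - x) ≤ α →
      C ≤ |derivWithin ρ0 (Set.Icc 0 1) x|)
    (hint : ∀ x ∈ Set.Icc (0:ℝ) 1, α ≤ min x (1 - x) → Cα ≤ ρ0 x) :
    ∃ C' > (0:ℝ), ∀ u : ℝ → ℝ, ContDiff ℝ 2 u →
      (∫ x in Set.Ioo (0:ℝ) 1, (deriv u x) ^ 2)
        ≤ C' * ((∫ x in Set.Ioo (0:ℝ) 1, (ρ0 x * iteratedDeriv 2 u x) ^ 2)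
            + (∫ x in Set.Ioo (0:ℝ) 1, (derivWithin ρ0 (Set.Icc 0 1) x * deriv u x) ^ 2)
            + (∫ x in Set.Ioo (0:ℝ) 1, (ρ0 x * deriv u x) ^ 2)) :=
  unweighted_from_weighted_general ρ0 α C Cα hC hCα hρ0 hder hint
end
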